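/- arXiv:2005.09962 — 3 statements merged into one kernel-verified Lean document; each statement's English description precedes it below -/
import Mathlib

section
/- For every t > 0 and every integer k ≥ 1, setting δ = t/M, the discrete sum ∑ δ^k (1−δ)^{−k(k+3)/2} (1−δ)^{(M−m₁) + ∑_{i=1}^{k−1}(i+1)(m_i−m_{i+1}) + (k+1)m_k}, taken over all integer sequences M ≥ m₁ > m₂ > ⋯ > m_k ≥ 1, converges as M → ∞ to e^{−t}(1 − e^{−t})^k / k!. -/
/-!
Since `m₁ > ⋯ > m_k`, the exponent of `1 - δ` telescopes to `M + m₁ + ⋯ + m_k`. With `q = 1 - δ`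
the sum is therefore `δ^k q^(M - k(k+3)/2) ∑_A q^(ΣA)` over the `k`-subsets `A` of `{1, …, M}`, and by
the `q`-binomial theorem `∑_A q^(ΣA) = q^(k(k+1)/2) [M choose k]_q`. As `δ [n]_q = 1 - q^n`, the sum
equals `q^(M-k) ∏_{i<k} (1 - q^(M-i)) / [i+1]_q`. When `M → ∞`, `q → 1` and `q^(M-i) → e^(-t)`,
while `[i+1]_q → i + 1`.
-/

open Filter Finset Real

theorem geom_sum_range_add {R : Type*} [Semiring R] (q : R) (n m : ℕ) :
    ∑ j ∈ range (n + m), q ^ j = ∑ j ∈ range n, q ^ j + q ^ n * ∑ j ∈ range m, q ^ j := by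
  rw [sum_range_add, mul_sum]
  simp only [pow_add]

theorem Finset.sum_powersetCard_succ_insert {α β : Type*} [DecidableEq α] [AddCommMonoid β]
    {x : α} {s : Finset α} (hx : x ∉ s) (k : ℕ) (f : Finset α → β) :
    ∑ A ∈ (insert x s).powersetCard (k + 1), f A =
      ∑ A ∈ s.powersetCard (k + 1), f A + ∑ A ∈ s.powersetCard k, f (insert x A) := by
  have hx' : ∀ A ∈ s.powersetCard k, x ∉ A := fun A hA h => hx ((mem_powersetCard.1 hA).1 h)
  rw [powersetCard_succ_insert hx, sum_union, sum_image]
  · intro A hA B hB hAB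
    rw [← erase_insert (hx' A hA), hAB, erase_insert (hx' B hB)]
  · refine disjoint_left.2 fun A hA hA' => ?_
    obtain ⟨B, -, rfl⟩ := mem_image.1 hA'
    exact hx ((mem_powersetCard.1 hA).1 (mem_insert_self x B))

/-- The `q`-binomial theorem `∑_{A} q^{ΣA} = q^{k(k+1)/2} [M choose k]_q`, cleared of
denominators. -/
theorem sum_powersetCard_Icc_pow_sum_mul {R : Type*} [CommSemiring R] (q : R) (M k : ℕ) :
    (∑ A ∈ (Icc 1 M).powersetCard k, q ^ (∑ a ∈ A, a)) * ∏ i ∈ range k, ∑ j ∈ range (i + 1), q ^ j =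
      q ^ (∑ i ∈ range k, (i + 1)) * ∏ i ∈ range k, ∑ j ∈ range (M - i), q ^ j := by
  induction M generalizing k with
  | zero =>
    rcases k with _ | k
    · simp
    · rw [powersetCard_eq_empty.2 (by simp), prod_range_succ']
      simp
  | succ M ih =>
    rcases k with _ | k
    · simp
    rcases lt_or_ge M k with hMk | hkM
    · rw [powersetCard_eq_empty.2 (by simpa using hMk), sum_empty, zero_mul,
        prod_eq_zero (mem_range.2 (by omega : M + 1 < k + 1)) (by simp), mul_zero]
    have hinsert : ∑ A ∈ (Icc 1 M).powersetCard k, q ^ (∑ a ∈ insert (M + 1) A, a) =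
        q ^ (M + 1) * ∑ A ∈ (Icc 1 M).powersetCard k, q ^ (∑ a ∈ A, a) := by
      rw [mul_sum]
      refine sum_congr rfl fun A hA => ?_
      rw [sum_insert fun h => by simpa using (mem_powersetCard.1 hA).1 h, pow_add]
    have hsplit : ∑ j ∈ range (M + 1), q ^ j =
        ∑ j ∈ range (M - k), q ^ j + q ^ (M - k) * ∑ j ∈ range (k + 1), q ^ j := by
      rw [← geom_sum_range_add]; congr 2; omega
    have hpow : q ^ (M + 1) = q ^ (k + 1) * q ^ (M - k) := by rw [← pow_add]; congr 1; omega
    rw [← insert_Icc_right_eq_Icc_add_one (by omega), sum_powersetCard_succ_insert (by simp),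
      hinsert]
    calc _ = (∑ A ∈ (Icc 1 M).powersetCard (k + 1), q ^ (∑ a ∈ A, a)) *
            ∏ i ∈ range (k + 1), ∑ j ∈ range (i + 1), q ^ j +
          q ^ (M + 1) * (∑ j ∈ range (k + 1), q ^ j) *
            ((∑ A ∈ (Icc 1 M).powersetCard k, q ^ (∑ a ∈ A, a)) *
              ∏ i ∈ range k, ∑ j ∈ range (i + 1), q ^ j) := by
          rw [prod_range_succ]; ring
      _ = _ := by
          rw [ih, ih, prod_range_succ (fun i => ∑ j ∈ range (M - i), q ^ j), prod_range_succ',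
            sum_range_succ, pow_add]
          simp only [Nat.add_sub_add_right, Nat.sub_zero]
          rw [hsplit, hpow]
          ring

open scoped Classical in
theorem Finset.sum_piFinset_strictAnti_eq_sum_powersetCard {α β : Type*} [LinearOrder α]
    [AddCommMonoid β] (s : Finset α) (k : ℕ) (g : Finset α → β) :
    ∑ m ∈ Fintype.piFinset (fun _ : Fin k => s), (if StrictAnti m then g (univ.image m) else 0) =
      ∑ A ∈ s.powersetCard k, g A := by
  rw [← sum_filter]
  refine sum_bij (fun m _ => univ.image m) ?_ ?_ ?_ fun _ _ => rfl
  · intro m hm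
    obtain ⟨hs, hm⟩ := mem_filter.1 hm
    refine mem_powersetCard.2 ⟨?_, ?_⟩
    · simpa [image_subset_iff] using hs
    · rw [card_image_of_injective _ hm.injective, card_univ, Fintype.card_fin]
  · intro m hm m' hm' h
    rw [← (mem_filter.1 hm).2.range_inj (mem_filter.1 hm').2]
    simpa only [coe_image, coe_univ, Set.image_univ] using congrArg ((↑) : Finset α → Set α) h
  · intro A hA
    obtain ⟨hAs, hcard⟩ := mem_powersetCard.1 hA
    refine ⟨fun i => A.orderEmbOfFin hcard i.rev, mem_filter.2 ⟨?_, ?_⟩, ?_⟩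
    · exact Fintype.mem_piFinset.2 fun i => hAs (orderEmbOfFin_mem A hcard _)
    · exact fun i j hij => (A.orderEmbOfFin hcard).strictMono (Fin.rev_lt_rev.2 hij)
    · ext b
      rw [mem_image, ← mem_coe, ← A.range_orderEmbOfFin hcard, Set.mem_range]
      simpa using (Fin.rev_surjective.exists (p := fun i => A.orderEmbOfFin hcard i = b)).symm

theorem sum_range_add_two_mul_sub_succ (μ : ℕ → ℕ) (n : ℕ) (hμ : ∀ i < n, μ (i + 1) ≤ μ i) :
    ∑ i ∈ range n, (i + 2) * (μ i - μ (i + 1)) + (n + 2) * μ n =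
      μ 0 + ∑ i ∈ range (n + 1), μ i := by
  induction n with
  | zero => simp [two_mul]
  | succ n ih =>
    obtain ⟨c, hc⟩ := Nat.exists_eq_add_of_le (hμ n n.lt_succ_self)
    have ih := ih fun i hi => hμ i (by omega)
    rw [sum_range_succ, sum_range_succ _ (n + 1), hc, Nat.add_sub_cancel_left]
    rw [hc] at ih
    linarith

theorem sub_add_sum_range_mul_sub_succ (μ : ℕ → ℕ) (M k : ℕ)
    (hμ : ∀ i, i + 1 < k → μ (i + 1) ≤ μ i) (hM : μ 0 ≤ M) :
    (M - μ 0) + ∑ i ∈ range (k - 1), (i + 2) * (μ i - μ (i + 1)) + (k + 1) * μ (k - 1) =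
      M + ∑ i ∈ range k, μ i := by
  rcases k with _ | n
  · simpa using Nat.sub_add_cancel hM
  · have := sum_range_add_two_mul_sub_succ μ n fun i hi => hμ i (by omega)
    simp only [Nat.add_sub_cancel, add_assoc, Nat.reduceAdd] at this ⊢
    omega

/-- The Riemann sum with `k` collisions in closed form, at `q = 1 - t / M`. -/
noncomputable def wildClosedForm (k M : ℕ) (q : ℝ) : ℝ :=
  q ^ M * (q ^ (∑ i ∈ range k, (i + 1)) / q ^ (k * (k + 3) / 2)) *
    ((∏ i ∈ range k, (1 - q ^ (M - i))) / ∏ i ∈ range k, ∑ j ∈ range (i + 1), q ^ j)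

open scoped Classical in
theorem sum_piFinset_strictAnti_eq_wildClosedForm (d : ℝ) (M k : ℕ) (hd : 0 ≤ 1 - d) :
    ∑ m ∈ Fintype.piFinset (fun _ : Fin k => Icc 1 M),
        (if StrictAnti m then
          let μ : ℕ → ℕ := fun j => if h : j < k then m ⟨j, h⟩ else 0
          d ^ k / (1 - d) ^ (k * (k + 3) / 2) *
            (1 - d) ^ ((M - μ 0) + (∑ i ∈ range (k - 1), (i + 2) * (μ i - μ (i + 1))) +
              (k + 1) * μ (k - 1))
        else 0) =
      wildClosedForm k M (1 - d) := by
  set q := 1 - d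
  have hsubsets : ∑ m ∈ Fintype.piFinset (fun _ : Fin k => Icc 1 M),
        (if StrictAnti m then
          let μ : ℕ → ℕ := fun j => if h : j < k then m ⟨j, h⟩ else 0
          d ^ k / q ^ (k * (k + 3) / 2) *
            q ^ ((M - μ 0) + (∑ i ∈ range (k - 1), (i + 2) * (μ i - μ (i + 1))) +
              (k + 1) * μ (k - 1))
        else 0) =
      d ^ k / q ^ (k * (k + 3) / 2) * q ^ M * ∑ A ∈ (Icc 1 M).powersetCard k, q ^ (∑ a ∈ A, a) := by
    rw [mul_sum, ← sum_piFinset_strictAnti_eq_sum_powersetCard]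
    refine sum_congr rfl fun m hm => ?_
    split_ifs with hanti
    · refine (congrArg (fun e => d ^ k / q ^ (k * (k + 3) / 2) * q ^ e)
        (sub_add_sum_range_mul_sub_succ (fun j => if h : j < k then m ⟨j, h⟩ else 0) M k
          (fun i hi => ?_) ?_)).trans ?_
      · simp only [dif_pos hi, dif_pos (Nat.lt_of_succ_lt hi)]
        exact (hanti (Fin.mk_lt_mk.2 i.lt_succ_self)).le
      · split_ifs
        exacts [(mem_Icc.1 (Fintype.mem_piFinset.1 hm _)).2, M.zero_le]
      · rw [← Fin.sum_univ_eq_sum_range, sum_image fun _ _ _ _ h => hanti.injective h, pow_add,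
          mul_assoc]
        simp
    · rfl
  have hdenom : ∏ i ∈ range k, ∑ j ∈ range (i + 1), q ^ j ≠ 0 :=
    prod_ne_zero_iff.2 fun i _ => (geom_sum_pos hd i.succ_ne_zero).ne'
  have hnumer : d ^ k * ∏ i ∈ range k, ∑ j ∈ range (M - i), q ^ j =
      ∏ i ∈ range k, (1 - q ^ (M - i)) := by
    calc _ = ∏ i ∈ range k, d * ∑ j ∈ range (M - i), q ^ j := by
          rw [← pow_card_mul_prod, card_range]
      _ = _ := prod_congr rfl fun i _ => by rw [← mul_neg_geom_sum, sub_sub_cancel]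
  rw [hsubsets, wildClosedForm, ← hnumer,
    eq_div_of_mul_eq hdenom (sum_powersetCard_Icc_pow_sum_mul q M k)]
  ring

theorem tendsto_wildClosedForm (q : ℕ → ℝ) (L : ℝ) (k : ℕ) (hq : Tendsto q atTop (nhds 1))
    (hL : Tendsto (fun M => q M ^ M) atTop (nhds L)) :
    Tendsto (fun M => wildClosedForm k M (q M)) atTop (nhds (L * (1 - L) ^ k / k.factorial)) := by
  have hpow_sub (i : ℕ) : Tendsto (fun M => q M ^ (M - i)) atTop (nhds L) := by
    refine (by simpa [Pi.div_def] using hL.div (hq.pow i) (by simp) :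
      Tendsto (fun M => q M ^ M / q M ^ i) _ _).congr' ?_
    filter_upwards [hq.eventually_ne one_ne_zero, eventually_ge_atTop i] with M hM hiM
    rw [pow_sub₀ _ hM hiM, div_eq_mul_inv]
  have hratio (a b : ℕ) : Tendsto (fun M => q M ^ a / q M ^ b) atTop (nhds 1) := by
    simpa [Pi.div_def] using (hq.pow a).div (hq.pow b) (by simp)
  have hnumer : Tendsto (fun M => ∏ i ∈ range k, (1 - q M ^ (M - i))) atTop
      (nhds ((1 - L) ^ k)) := by
    simpa using tendsto_finsetProd (range k) fun i _ =>
      (tendsto_const_nhds (x := (1 : ℝ))).sub (hpow_sub i)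
  have hdenom : Tendsto (fun M => ∏ i ∈ range k, ∑ j ∈ range (i + 1), q M ^ j) atTop
      (nhds (k.factorial : ℝ)) := by
    rw [← prod_range_add_one_eq_factorial, Nat.cast_prod]
    refine tendsto_finsetProd _ fun i _ => ?_
    simpa using tendsto_finsetSum (range (i + 1)) fun j _ => hq.pow j
  simpa [wildClosedForm, mul_div_assoc] using
    (hL.mul (hratio _ _)).mul (hnumer.div hdenom (by positivity))

open scoped Classical in
theorem riemann_sum_wild_term_general (t : ℝ) (k : ℕ) :
    Tendsto
      (fun M : ℕ =>
        ∑ m ∈ Fintype.piFinset (fun _ : Fin k => Finset.Icc 1 M),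
          if StrictAnti m then
            let μ : ℕ → ℕ := fun j => if h : j < k then m ⟨j, h⟩ else 0
            (t / M) ^ k /
                (1 - t / M) ^ (k * (k + 3) / 2) *
              (1 - t / M) ^
                ((M - μ 0) + (∑ i ∈ Finset.range (k - 1), (i + 2) * (μ i - μ (i + 1))) +
                  (k + 1) * μ (k - 1))
          else 0)
      atTop
      (nhds (Real.exp (-t) * (1 - Real.exp (-t)) ^ k / (k.factorial : ℝ))) := by
  have hq : Tendsto (fun M : ℕ => 1 - t / M) atTop (nhds 1) := by
    simpa using tendsto_const_nhds.sub (tendsto_const_div_atTop_nhds_zero_nat t)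
  have hexp : Tendsto (fun M : ℕ => (1 - t / M) ^ M) atTop (nhds (exp (-t))) := by
    simpa [sub_eq_add_neg, neg_div] using tendsto_one_add_div_pow_exp (-t)
  refine (tendsto_wildClosedForm _ _ k hq hexp).congr' ?_
  filter_upwards [hq.eventually (lt_mem_nhds one_pos)] with M hM
  exact (sum_piFinset_strictAnti_eq_wildClosedForm _ M k hM.le).symm

open scoped Classical in
/-- With `δ = t/M`, the discrete sum
`∑ δ^k (1−δ)^{−k(k+3)/2} (1−δ)^{(M−m₁) + ∑_{i=1}^{k−1}(i+1)(m_i−m_{i+1}) + (k+1)m_k}`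
over all integer sequences `M ≥ m₁ > m₂ > ⋯ > m_k ≥ 1` converges, as `M → ∞`, to
`e^{−t}(1 − e^{−t})^k / k!`.
Here a sequence `(m₁, …, m_k)` is encoded as a strictly decreasing function
`m : Fin k → ℕ` with values in `{1, …, M}` (so `m_i = m (i-1)`), and `μ j`
denotes `m j` extended by `0` outside `Fin k`. -/
theorem riemann_sum_wild_term (t : ℝ) (ht : 0 < t) (k : ℕ) (hk : 1 ≤ k) :
    Tendsto
      (fun M : ℕ =>
        ∑ m ∈ Fintype.piFinset (fun _ : Fin k => Finset.Icc 1 M),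
          if StrictAnti m then
            let μ : ℕ → ℕ := fun j => if h : j < k then m ⟨j, h⟩ else 0
            (t / M) ^ k /
                (1 - t / M) ^ (k * (k + 3) / 2) *
              (1 - t / M) ^
                ((M - μ 0) + (∑ i ∈ Finset.range (k - 1), (i + 2) * (μ i - μ (i + 1))) +
                  (k + 1) * μ (k - 1))
          else 0)
      atTop
      (nhds (Real.exp (-t) * (1 - Real.exp (-t)) ^ k / (k.factorial : ℝ))) :=
  riemann_sum_wild_term_general t k
end

section
/- For every β > 0, every integer k ≥ 1, and all velocities v₁, v₂, …, v_{1+k} ∈ ℝ³, the following pointwise inequality holds: e^{−(β/2) ∑_{l=1}^{1+k} |v_l|²} · ∏_{i=1}^{k} [ (1+k)|v_{1+i}| + (1+k)^{1/2} (∑_{l=1}^{1+k} |v_l|²)^{1/2} ] ≤ e^{−(β/4)|v₁|²} · ∏_{i=1}^{k} e^{−(β/4)|v_{1+i}|²} [ (1+k)|v_{1+i}| + √(2k(1+k)/(eβ)) ]. -/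
open Real Finset

lemma aux_sqrt_exp (c x : ℝ) (hc : 0 < c) (hx : 0 ≤ x) :
    Real.sqrt x * Real.exp (-c * x) ≤ Real.sqrt (1 / (2 * Real.exp 1 * c)) := by
  have he : (0:ℝ) < Real.exp 1 := Real.exp_pos 1
  have hkey : x * Real.exp (-(2 * c) * x) ≤ 1 / (2 * Real.exp 1 * c) := by
    set t := 2 * c * x with ht
    have ht0 : 0 ≤ t := by positivity
    have h1 : t ≤ Real.exp (t - 1) := by
      have := Real.add_one_le_exp (t - 1)
      linarith
    have h2 : t * Real.exp (-t) ≤ 1 / Real.exp 1 := by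
      have hexp : Real.exp (t - 1) * Real.exp (-t) = 1 / Real.exp 1 := by
        rw [← Real.exp_add]
        rw [show t - 1 + -t = -1 by ring, Real.exp_neg]
        rw [one_div]
      have := mul_le_mul_of_nonneg_right h1 (Real.exp_nonneg (-t))
      linarith [this, hexp ▸ this]
    have hx' : x * Real.exp (-t) = (1 / (2 * c)) * (t * Real.exp (-t)) := by
      field_simp [ht]; ring
    rw [show -(2 * c) * x = -t by rw [ht]; ring, hx']
    have h3 : (1 / (2 * c)) * (t * Real.exp (-t)) ≤ (1 / (2 * c)) * (1 / Real.exp 1) := by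
      apply mul_le_mul_of_nonneg_left h2; positivity
    calc (1 / (2 * c)) * (t * Real.exp (-t)) ≤ (1 / (2 * c)) * (1 / Real.exp 1) := h3
      _ = 1 / (2 * Real.exp 1 * c) := by field_simp
  have hnn : 0 ≤ Real.sqrt x * Real.exp (-c * x) := by positivity
  rw [show Real.sqrt x * Real.exp (-c*x) = Real.sqrt (x * Real.exp (-(2*c)*x)) by
    rw [Real.sqrt_mul hx]
    rw [show (-(2*c)*x) = (-c*x) + (-c*x) by ring, Real.exp_add,
      Real.sqrt_mul_self (Real.exp_nonneg _)]]
  exact Real.sqrt_le_sqrt hkey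

/-- Key pointwise Gaussian estimate (appendix of the paper): for `β > 0`, `k ≥ 1`
and velocities `v₁, …, v_{1+k} ∈ ℝ³` (encoded as `v : Fin (k+1) → EuclideanSpace ℝ (Fin 3)`,
with `v₁ = v 0` and `v_{1+i} = v i.succ`):
`e^{−(β/2)∑|v_l|²} ∏_{i=1}^k [(1+k)|v_{1+i}| + (1+k)^{1/2}(∑|v_l|²)^{1/2}]
  ≤ e^{−(β/4)|v₁|²} ∏_{i=1}^k e^{−(β/4)|v_{1+i}|²} [(1+k)|v_{1+i}| + √(2k(1+k)/(eβ))]`. -/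
theorem pointwise_gaussian_estimate (β : ℝ) (hβ : 0 < β) (k : ℕ) (hk : 1 ≤ k)
    (v : Fin (k + 1) → EuclideanSpace ℝ (Fin 3)) :
    Real.exp (-(β / 2) * ∑ l, ‖v l‖ ^ 2) *
        ∏ i : Fin k,
          ((1 + (k : ℝ)) * ‖v i.succ‖ +
            Real.sqrt (1 + (k : ℝ)) * Real.sqrt (∑ l, ‖v l‖ ^ 2)) ≤
      Real.exp (-(β / 4) * ‖v 0‖ ^ 2) *
        ∏ i : Fin k,
          Real.exp (-(β / 4) * ‖v i.succ‖ ^ 2) *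
            ((1 + (k : ℝ)) * ‖v i.succ‖ +
              Real.sqrt (2 * k * (1 + (k : ℝ)) / (Real.exp 1 * β))) := by
  have hS : 0 ≤ ∑ l, ‖v l‖ ^ 2 := Finset.sum_nonneg fun l _ => by positivity
  set S := ∑ l, ‖v l‖ ^ 2 with hSdef
  have hk0 : (0:ℝ) < k := by exact_mod_cast hk
  have he : (0:ℝ) < Real.exp 1 := Real.exp_pos 1
  have hterm : ∀ i : Fin k,
      Real.exp (-(β/(4*k)) * S) *
          ((1+(k:ℝ)) * ‖v i.succ‖ + Real.sqrt (1+(k:ℝ)) * Real.sqrt S)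
        ≤ (1+(k:ℝ)) * ‖v i.succ‖ +
            Real.sqrt (2*k*(1+(k:ℝ))/(Real.exp 1 * β)) := by
    intro i
    have hc : (0:ℝ) < β/(4*k) := by positivity
    have hexp1 : Real.exp (-(β/(4*k)) * S) ≤ 1 := by
      apply Real.exp_le_one_iff.mpr
      nlinarith
    have hexp0 : 0 ≤ Real.exp (-(β/(4*k)) * S) := Real.exp_nonneg _
    have h2 := aux_sqrt_exp (β/(4*k)) S hc hS
    have heq : Real.sqrt (1+(k:ℝ)) * Real.sqrt (1/(2*Real.exp 1*(β/(4*k))))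
        = Real.sqrt (2*k*(1+(k:ℝ))/(Real.exp 1*β)) := by
      rw [← Real.sqrt_mul (by positivity)]
      congr 1
      field_simp
      ring
    have hA : (0:ℝ) ≤ (1+(k:ℝ)) * ‖v i.succ‖ := by positivity
    have hB : (0:ℝ) ≤ Real.sqrt (1+(k:ℝ)) := Real.sqrt_nonneg _
    calc Real.exp (-(β/(4*k)) * S) *
          ((1+(k:ℝ)) * ‖v i.succ‖ + Real.sqrt (1+(k:ℝ)) * Real.sqrt S)
        = (1+(k:ℝ)) * ‖v i.succ‖ * Real.exp (-(β/(4*k)) * S) +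
            Real.sqrt (1+(k:ℝ)) * (Real.sqrt S * Real.exp (-(β/(4*k)) * S)) := by ring
      _ ≤ (1+(k:ℝ)) * ‖v i.succ‖ * 1 +
            Real.sqrt (1+(k:ℝ)) * Real.sqrt (1/(2*Real.exp 1*(β/(4*k)))) := by
          gcongr
      _ = (1+(k:ℝ)) * ‖v i.succ‖ +
            Real.sqrt (2*k*(1+(k:ℝ))/(Real.exp 1 * β)) := by rw [heq]; ring
  have e1 : ∏ _i : Fin k, Real.exp (-(β/(4*k))*S) = Real.exp (-(β/4)*S) := by
    rw [Finset.prod_const, Finset.card_univ, Fintype.card_fin, ← Real.exp_nat_mul]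
    congr 1
    field_simp
  have e2 : Real.exp (-(β/4)*S)
      = Real.exp (-(β/4)*‖v 0‖^2) * ∏ i : Fin k, Real.exp (-(β/4)*‖v i.succ‖^2) := by
    rw [← Real.exp_sum, ← Real.exp_add]
    congr 1
    rw [hSdef, Fin.sum_univ_succ, mul_add, Finset.mul_sum]
  have e3 : Real.exp (-(β/2)*S) = Real.exp (-(β/4)*S) * Real.exp (-(β/4)*S) := by
    rw [← Real.exp_add]; congr 1; ring
  calc Real.exp (-(β/2)*S) *
        ∏ i : Fin k, ((1+(k:ℝ)) * ‖v i.succ‖ + Real.sqrt (1+(k:ℝ)) * Real.sqrt S)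
      = (Real.exp (-(β/4)*‖v 0‖^2) * ∏ i : Fin k, Real.exp (-(β/4)*‖v i.succ‖^2)) *
          ∏ i : Fin k, (Real.exp (-(β/(4*k))*S) *
            ((1+(k:ℝ)) * ‖v i.succ‖ + Real.sqrt (1+(k:ℝ)) * Real.sqrt S)) := by
        rw [Finset.prod_mul_distrib, e1, e3, e2]; ring
    _ ≤ (Real.exp (-(β/4)*‖v 0‖^2) * ∏ i : Fin k, Real.exp (-(β/4)*‖v i.succ‖^2)) *
          ∏ i : Fin k, ((1+(k:ℝ)) * ‖v i.succ‖ +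
            Real.sqrt (2*k*(1+(k:ℝ))/(Real.exp 1 * β))) := by
        apply mul_le_mul_of_nonneg_left
        · exact Finset.prod_le_prod (fun i _ => by positivity) (fun i _ => hterm i)
        · positivity
    _ = Real.exp (-(β/4)*‖v 0‖^2) *
          ∏ i : Fin k, (Real.exp (-(β/4)*‖v i.succ‖^2) *
            ((1+(k:ℝ)) * ‖v i.succ‖ + Real.sqrt (2*k*(1+(k:ℝ))/(Real.exp 1 * β)))) := by
        rw [Finset.prod_mul_distrib]; ring
end

section
/- For every β > 0 there exists a constant C₁ > 0, depending only on β, such that for all integers k ≥ 1 and 0 ≤ n' ≤ k and all reals t* ≤ t' ≤ t: the integral over the set {(t₁,…,t_k) ∈ ℝ^k : t > t₁ > ⋯ > t_k > t*, t_{n'} > t' > t_{n'+1}} (conventions t₀ = t, t_{k+1} = t*) of ∫_{ℝ^{3k}} ∏_{i=1}^{k} e^{−(β/4)|v_i|²} [ (1+k)|v_i| + √(2k(1+k)/(eβ)) ] dv₁⋯dv_k is at most e · C₁^k (t − t')^{n'} (t' − t*)^{k−n'}. -/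
/-!
The velocity integral factorises into `k` copies of one integral over `ℝ³`, and since
`√(2k(1+k)/(eβ)) ≤ (1+k)√(2/β)`, each copy is at most `(1+k)` times the Gaussian moment
`M = ∫ e^{-(β/4)|v|²}(|v| + √(2/β)) dv`. The velocity integral does not depend on the times, so
the time integral is the volume of the time set. That set lies in a product of two ordered
simplices with `n'` and `k - n'` coordinates, of volumes at most `(t - t')^{n'}/n'!` and
`(t' - t*)^{k-n'}/(k-n')!`: the `m!` permuted copies of an ordered simplex in `(a, b)^m` are
disjoint. Finally `(1+k)^k ≤ e^{1+k} k!` and `k! ≤ 2^k n'! (k-n')!`, so `C₁ = 2eM` works.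
-/

open MeasureTheory Set Real Nat

theorem measurePreserving_comp_equiv {ι ι' α : Type*} [Fintype ι] [Fintype ι']
    [MeasurableSpace α] (μ : Measure α) [SigmaFinite μ] (e : ι ≃ ι') :
    MeasurePreserving (fun x : ι' → α => x ∘ e) (Measure.pi fun _ => μ)
      (Measure.pi fun _ => μ) := by
  convert measurePreserving_piCongrLeft (fun _ : ι => μ) e.symm using 1
  ext x i
  simp [MeasurableEquiv.coe_piCongrLeft, Equiv.piCongrLeft_apply]

theorem measurePreserving_finAdd_split (n m : ℕ) :
    MeasurePreserving (fun T : Fin (n + m) → ℝ => (T ∘ Fin.castAdd m, T ∘ Fin.natAdd n)) :=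
  (volume_measurePreserving_sumPiEquivProdPi (fun _ : Fin n ⊕ Fin m => ℝ)).comp
    (measurePreserving_comp_equiv volume finSumFinEquiv)

theorem Equiv.Perm.eq_of_strictAnti_comp {ι α : Type*} [LinearOrder ι] [Finite ι]
    [Preorder α] {T : ι → α} {σ τ : Equiv.Perm ι} (hσ : StrictAnti (T ∘ σ))
    (hτ : StrictAnti (T ∘ τ)) :
    σ = τ := by
  have hT : Function.Injective T := hσ.injective.of_comp_right σ.surjective
  have h : T ∘ σ = T ∘ τ := by
    rw [← hσ.range_inj hτ, EquivLike.range_comp, EquivLike.range_comp]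
  exact Equiv.ext fun i => hT (congrFun h i)

def decreasingTuples (ι : Type*) [Preorder ι] (s : Set ℝ) : Set (ι → ℝ) :=
  {T | StrictAnti T ∧ ∀ i, T i ∈ s}

theorem measurableSet_decreasingTuples {ι : Type*} [Preorder ι] [Countable ι] {s : Set ℝ}
    (hs : MeasurableSet s) : MeasurableSet (decreasingTuples ι s) := by
  have : decreasingTuples ι s =
      (⋂ (i) (j) (_ : i < j), {T | T j < T i}) ∩ univ.pi fun _ => s := by
    ext T; simp [decreasingTuples, StrictAnti]
  rw [this]
  exact .inter (.iInter fun i => .iInter fun j => .iInter fun _ =>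
    measurableSet_lt (measurable_pi_apply j) (measurable_pi_apply i)) (.univ_pi fun _ => hs)

theorem factorial_mul_measure_decreasingTuples_le {ι : Type*} [Fintype ι] [LinearOrder ι]
    (μ : Measure ℝ) [SigmaFinite μ] {s : Set ℝ} (hs : MeasurableSet s) :
    (Fintype.card ι)! * Measure.pi (fun _ : ι => μ) (decreasingTuples ι s) ≤
      μ s ^ Fintype.card ι := by
  set ν := Measure.pi fun _ : ι => μ
  set F : Equiv.Perm ι → Set (ι → ℝ) := fun σ => (· ∘ σ) ⁻¹' decreasingTuples ι s
  have hF : ∀ σ, ν (F σ) = ν (decreasingTuples ι s) := fun σ =>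
    (measurePreserving_comp_equiv μ σ).measure_preimage
      (measurableSet_decreasingTuples hs).nullMeasurableSet
  have hF_meas : ∀ σ, MeasurableSet (F σ) := fun σ =>
    (measurableSet_decreasingTuples hs).preimage (measurePreserving_comp_equiv μ σ).measurable
  have hF_disj : Pairwise (Function.onFun Disjoint F) := fun σ τ hστ =>
    Set.disjoint_left.2 fun _ hσ hτ => hστ (Equiv.Perm.eq_of_strictAnti_comp hσ.1 hτ.1)
  have hF_sub : ⋃ σ, F σ ⊆ univ.pi fun _ => s :=
    iUnion_subset fun σ T hT => mem_univ_pi.2 fun i => by simpa using hT.2 (σ.symm i)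
  calc (Fintype.card ι)! * ν (decreasingTuples ι s)
      = ∑ σ : Equiv.Perm ι, ν (F σ) := by simp [hF, Fintype.card_perm]
    _ = ν (⋃ σ, F σ) := by rw [measure_iUnion hF_disj hF_meas, tsum_fintype]
    _ ≤ ν (univ.pi fun _ => s) := measure_mono hF_sub
    _ = μ s ^ Fintype.card ι := by simp [ν, Measure.pi_pi]

theorem factorial_mul_volume_decreasingTuples_Ioo_le (n : ℕ) (a b : ℝ) :
    n ! * volume (decreasingTuples (Fin n) (Ioo a b)) ≤ ENNReal.ofReal (b - a) ^ n := by
  simpa [volume_pi, Real.volume_Ioo] using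
    factorial_mul_measure_decreasingTuples_le (ι := Fin n) volume measurableSet_Ioo

def clusterTimes (k n : ℕ) (hn : n ≤ k) (tstar t' t : ℝ) : Set (Fin k → ℝ) :=
  {T | StrictAnti (Fin.snoc (Fin.cons t T) tstar : Fin (k + 2) → ℝ) ∧
    t' < (Fin.snoc (Fin.cons t T) tstar : Fin (k + 2) → ℝ)
      ⟨n, hn.trans_lt (Nat.lt_add_of_pos_right two_pos)⟩ ∧
    (Fin.snoc (Fin.cons t T) tstar : Fin (k + 2) → ℝ)
      ⟨n + 1, Nat.succ_lt_succ (Nat.lt_succ_of_le hn)⟩ < t'}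

theorem snoc_cons_apply_succ {k : ℕ} (t s : ℝ) (T : Fin k → ℝ) (i : ℕ) (hi : i < k) :
    (Fin.snoc (Fin.cons t T) s : Fin (k + 2) → ℝ) ⟨i + 1, by omega⟩ = T ⟨i, hi⟩ := by
  rw [show (⟨i + 1, _⟩ : Fin (k + 2)) = (Fin.succ ⟨i, hi⟩).castSucc from rfl,
    Fin.snoc_castSucc, Fin.cons_succ]

theorem clusterTimes_subset (n m : ℕ) (tstar t' t : ℝ) :
    clusterTimes (n + m) n (Nat.le_add_right n m) tstar t' t ⊆
      (fun T => (T ∘ Fin.castAdd m, T ∘ Fin.natAdd n)) ⁻¹'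
        (decreasingTuples (Fin n) (Ioo t' t) ×ˢ decreasingTuples (Fin m) (Ioo tstar t')) := by
  rintro T ⟨hT, hn, hn1⟩
  set e : Fin (n + m + 2) → ℝ := Fin.snoc (Fin.cons t T) tstar
  have he : ∀ i (hi : i < n + m), T ⟨i, hi⟩ = e ⟨i + 1, by omega⟩ := fun i hi =>
    (snoc_cons_apply_succ t tstar T i hi).symm
  have he_zero : e ⟨0, by omega⟩ = t := by
    rw [show (⟨0, _⟩ : Fin (n + m + 2)) = Fin.castSucc 0 from rfl]
    exact Fin.snoc_castSucc (α := fun _ => ℝ) ..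
  have he_last : e ⟨n + m + 1, by omega⟩ = tstar := Fin.snoc_last ..
  have lt_iff : ∀ {i j : ℕ} (hi : i < n + m + 2) (hj : j < n + m + 2),
      e ⟨i, hi⟩ < e ⟨j, hj⟩ ↔ j < i := fun _ _ => hT.lt_iff_gt
  have le_iff : ∀ {i j : ℕ} (hi : i < n + m + 2) (hj : j < n + m + 2),
      e ⟨i, hi⟩ ≤ e ⟨j, hj⟩ ↔ j ≤ i := fun _ _ => hT.le_iff_ge
  refine ⟨⟨fun i j hij => ?_, fun i => ⟨?_, ?_⟩⟩, fun i j hij => ?_, fun i => ⟨?_, ?_⟩⟩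
  all_goals simp only [Function.comp_apply, Fin.castAdd, Fin.natAdd, Fin.castLE]
  · rw [he, he, lt_iff]; simpa using hij
  · rw [he]; exact hn.trans_le ((le_iff _ _).2 (by omega))
  · rw [he, ← he_zero]; exact (lt_iff _ _).2 (by omega)
  · rw [he, he, lt_iff]; simpa using hij
  · rw [he, ← he_last]; exact (lt_iff _ _).2 (by omega)
  · rw [he]; exact lt_of_le_of_lt ((le_iff _ _).2 (by omega)) hn1

theorem factorial_mul_factorial_mul_volumeReal_clusterTimes_le {k n : ℕ} (hn : n ≤ k)
    {tstar t' t : ℝ} (hst : tstar ≤ t') (htt : t' ≤ t) :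
    n ! * (k - n)! * volume.real (clusterTimes k n hn tstar t' t) ≤
      (t - t') ^ n * (t' - tstar) ^ (k - n) := by
  obtain ⟨m, rfl⟩ := Nat.exists_eq_add_of_le hn
  rw [Nat.add_sub_cancel_left]
  have h := calc
    n ! * m ! * volume (clusterTimes (n + m) n hn tstar t' t)
      ≤ n ! * m ! * (volume (decreasingTuples (Fin n) (Ioo t' t)) *
          volume (decreasingTuples (Fin m) (Ioo tstar t'))) := by
        grw [clusterTimes_subset, (measurePreserving_finAdd_split n m).measure_preimage
          ((measurableSet_decreasingTuples measurableSet_Ioo).prod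
            (measurableSet_decreasingTuples measurableSet_Ioo)).nullMeasurableSet,
          Measure.volume_eq_prod, Measure.prod_prod]
    _ = (n ! * volume (decreasingTuples (Fin n) (Ioo t' t))) *
          (m ! * volume (decreasingTuples (Fin m) (Ioo tstar t'))) := by ring
    _ ≤ ENNReal.ofReal (t - t') ^ n * ENNReal.ofReal (t' - tstar) ^ m := by
        gcongr <;> apply factorial_mul_volume_decreasingTuples_Ioo_le
  simpa [Measure.real, sub_nonneg.2 hst, sub_nonneg.2 htt] using
    ENNReal.toReal_mono (by finiteness) h

section Velocity

variable {E : Type*} [NormedAddCommGroup E] [NormedSpace ℝ E] [FiniteDimensional ℝ E]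
  [MeasurableSpace E] [BorelSpace E] [Nontrivial E] (μ : Measure E) [μ.IsAddHaarMeasure]
  {β : ℝ}

theorem integrable_norm_pow_mul_exp_neg_mul_sq_norm {b : ℝ} (hb : 0 < b) (n : ℕ) :
    Integrable (fun v : E => ‖v‖ ^ n * exp (-b * ‖v‖ ^ 2)) μ := by
  rw [integrable_fun_norm_addHaar μ (f := fun y => y ^ n * exp (-b * y ^ 2))]
  refine (integrableOn_rpow_mul_exp_neg_mul_sq hb (s := (Module.finrank ℝ E - 1 + n : ℕ))
    (neg_one_lt_zero.trans_le (Nat.cast_nonneg _))).congr_fun (fun y _ => ?_) measurableSet_Ioi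
  beta_reduce
  rw [rpow_natCast, pow_add, smul_eq_mul, mul_assoc]

noncomputable def collisionWeight (β : ℝ) (v : E) : ℝ :=
  exp (-(β / 4) * ‖v‖ ^ 2) * (‖v‖ + √(2 / β))

theorem integrable_collisionWeight (hβ : 0 < β) : Integrable (collisionWeight β) μ := by
  have h0 := integrable_norm_pow_mul_exp_neg_mul_sq_norm μ (by positivity : 0 < β / 4) 0
  have h1 := integrable_norm_pow_mul_exp_neg_mul_sq_norm μ (by positivity : 0 < β / 4) 1
  refine (h1.add (h0.mul_const √(2 / β))).congr (.of_forall fun v => ?_)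
  simp only [collisionWeight, Pi.add_apply, pow_zero, pow_one, one_mul]
  ring

theorem integral_collisionWeight_pos (hβ : 0 < β) : 0 < ∫ v, collisionWeight β v ∂μ := by
  have hpos : ∀ v : E, 0 < collisionWeight β v := fun v => by
    unfold collisionWeight; positivity
  rw [integral_pos_iff_support_of_nonneg (fun v => (hpos v).le)
    (integrable_collisionWeight μ hβ), Function.support_eq_univ fun v => (hpos v).ne']
  exact isOpen_univ.measure_pos μ univ_nonempty

theorem collision_factor_le (hβ : 0 < β) (k : ℕ) (x : ℝ) :
    exp (-(β / 4) * x ^ 2) * ((1 + k) * x + √(2 * k * (1 + k) / (exp 1 * β))) ≤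
      (1 + k) * (exp (-(β / 4) * x ^ 2) * (x + √(2 / β))) := by
  have hk : 2 * k * (1 + k) / (exp 1 * β) ≤ (1 + k) ^ 2 * (2 / β) := by
    rw [div_le_iff₀ (by positivity), mul_div_assoc', div_mul_eq_mul_div, le_div_iff₀ hβ]
    have he : 1 ≤ exp 1 := one_le_exp zero_le_one
    nlinarith [mul_le_mul_of_nonneg_left he (by positivity : (0 : ℝ) ≤ 2 * (1 + k) ^ 2 * β)]
  have hsqrt : √(2 * k * (1 + k) / (exp 1 * β)) ≤ (1 + k) * √(2 / β) :=
    calc _ ≤ √((1 + k) ^ 2 * (2 / β)) := sqrt_le_sqrt hk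
      _ = _ := by rw [sqrt_mul (sq_nonneg _), sqrt_sq (by positivity)]
  have := exp_pos (-(β / 4) * x ^ 2)
  nlinarith

theorem integral_prod_collision_factor_le (hβ : 0 < β) (k : ℕ) :
    ∫ v : Fin k → E, (∏ i, exp (-(β / 4) * ‖v i‖ ^ 2) *
        ((1 + (k : ℝ)) * ‖v i‖ + √(2 * k * (1 + (k : ℝ)) / (exp 1 * β))))
        ∂(Measure.pi fun _ => μ) ≤
      ((1 + k) * ∫ v, collisionWeight β v ∂μ) ^ k := by
  rw [integral_fintype_prod_eq_pow fun x : E => exp (-(β / 4) * ‖x‖ ^ 2) *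
      ((1 + (k : ℝ)) * ‖x‖ + √(2 * k * (1 + (k : ℝ)) / (exp 1 * β))),
    Fintype.card_fin, ← integral_const_mul]
  refine pow_le_pow_left₀ (integral_nonneg fun v => by positivity)
    (integral_mono_of_nonneg (.of_forall fun v => by positivity)
      ((integrable_collisionWeight μ hβ).const_mul _)
      (.of_forall fun v => collision_factor_le hβ k ‖v‖)) k

end Velocity

theorem add_one_pow_le_exp_mul_factorial (k : ℕ) : (1 + k : ℝ) ^ k ≤ exp (1 + k) * k ! := by
  have h := pow_div_factorial_le_exp _ (by positivity : (0 : ℝ) ≤ 1 + k) (k + 1)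
  rw [div_le_iff₀ (by positivity), pow_succ, factorial_succ, cast_mul, cast_succ] at h
  nlinarith [exp_pos (1 + k), (by positivity : (0 : ℝ) < k !)]

theorem factorial_le_two_pow_mul_factorial_mul_factorial {k n : ℕ} (hn : n ≤ k) :
    k ! ≤ 2 ^ k * (n ! * (k - n)!) := by
  rw [← choose_mul_factorial_mul_factorial hn, mul_assoc]
  exact Nat.mul_le_mul_right _ (choose_le_two_pow _ _)

theorem add_one_pow_le_factorial_mul_factorial {k n : ℕ} (hn : n ≤ k) :
    (1 + k : ℝ) ^ k ≤ exp 1 * (2 * exp 1) ^ k * (n ! * (k - n)!) := by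
  have h : (k ! : ℝ) ≤ 2 ^ k * (n ! * (k - n)!) := by
    exact_mod_cast factorial_le_two_pow_mul_factorial_mul_factorial hn
  calc _ ≤ exp (1 + k) * k ! := add_one_pow_le_exp_mul_factorial k
    _ ≤ exp (1 + k) * (2 ^ k * (n ! * (k - n)!)) := by gcongr
    _ = _ := by rw [exp_add, ← exp_one_pow]; ring

/-- Analytic core of Lemma 3.1 (a priori bound of Lanford type): for every `β > 0`
there is `C₁ > 0`, depending only on `β`, such that for all integers `k ≥ 1`,
`0 ≤ n' ≤ k` and reals `t* ≤ t' ≤ t`, the integral over the ordered time simplex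
`{t > t₁ > ⋯ > t_k > t*, t_{n'} > t' > t_{n'+1}}` (conventions `t₀ = t`,
`t_{k+1} = t*`) of the velocity integral
`∫_{ℝ^{3k}} ∏_{i=1}^k e^{−(β/4)|v_i|²}[(1+k)|v_i| + √(2k(1+k)/(eβ))] dv₁⋯dv_k`
is at most `e · C₁^k (t − t')^{n'} (t' − t*)^{k−n'}`. -/
theorem a_priori_cluster_bound (β : ℝ) (hβ : 0 < β) :
    ∃ C₁ : ℝ, 0 < C₁ ∧ ∀ (k n' : ℕ) (_ : 1 ≤ k) (_ : n' ≤ k)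
      (tstar t' t : ℝ) (_ : tstar ≤ t') (_ : t' ≤ t),
      (∫ T : Fin k → ℝ in
          {T : Fin k → ℝ |
            StrictAnti (Fin.snoc (Fin.cons t T) tstar : Fin (k + 2) → ℝ) ∧
            t' < (Fin.snoc (Fin.cons t T) tstar : Fin (k + 2) → ℝ) ⟨n', by omega⟩ ∧
            (Fin.snoc (Fin.cons t T) tstar : Fin (k + 2) → ℝ) ⟨n' + 1, by omega⟩ < t'},
        ∫ v : Fin k → EuclideanSpace ℝ (Fin 3),
          ∏ i : Fin k,
            Real.exp (-(β / 4) * ‖v i‖ ^ 2) *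
              ((1 + (k : ℝ)) * ‖v i‖ +
                Real.sqrt (2 * k * (1 + (k : ℝ)) / (Real.exp 1 * β)))) ≤
        Real.exp 1 * C₁ ^ k * (t - t') ^ n' * (t' - tstar) ^ (k - n') := by
  set M := ∫ v : EuclideanSpace ℝ (Fin 3), collisionWeight β v
  have hM : 0 < M := integral_collisionWeight_pos volume hβ
  refine ⟨2 * exp 1 * M, by positivity, fun k n' _ hn tstar t' t hst htt => ?_⟩
  rw [setIntegral_const, smul_eq_mul]
  have hT := factorial_mul_factorial_mul_volumeReal_clusterTimes_le hn hst htt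
  have hV := integral_prod_collision_factor_le (volume : Measure (EuclideanSpace ℝ (Fin 3))) hβ k
  have hk := add_one_pow_le_factorial_mul_factorial hn
  set τ := volume.real (clusterTimes k n' hn tstar t' t)
  have hτ : 0 ≤ τ := by positivity
  calc τ * _ ≤ τ * ((1 + k) * M) ^ k := by gcongr; exact hV
    _ ≤ τ * (exp 1 * (2 * exp 1) ^ k * (n' ! * (k - n')!) * M ^ k) := by rw [mul_pow]; gcongr
    _ = exp 1 * (2 * exp 1 * M) ^ k * (n' ! * (k - n')! * τ) := by ring
    _ ≤ exp 1 * (2 * exp 1 * M) ^ k * ((t - t') ^ n' * (t' - tstar) ^ (k - n')) := by gcongr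
    _ = _ := by ring
end
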